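/- Every parametric b-measure ν on ℝ^N is integrable along every continuous curve y : [a,b] → ℝ^N; that is, there exists L ∈ ℝ such that for every ε > 0 there is δ(ε) > 0 with |L − S_ν^y(Δ)| < ε for every tagged δ(ε)-partition Δ of [a,b]. -/

import Mathlib

open MeasureTheory Set Filter Topology

/-- A (continuous real) b-measure: a set function on the bounded Borel subsets of `ℝ`
which vanishes on `∅`, is countably additive over countable pairwise disjoint families
of bounded Borel sets with bounded union, and vanishes on singletons. -/
structure IsBMeasure (μ : Set ℝ → ℝ) : Prop where
  empty : μ ∅ = 0
  countably_additive : ∀ A : ℕ → Set ℝ, (∀ n, MeasurableSet (A n)) →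
    (∀ n, Bornology.IsBounded (A n)) → Pairwise (Function.onFun Disjoint A) →
    Bornology.IsBounded (⋃ n, A n) →
    HasSum (fun n => μ (A n)) (μ (⋃ n, A n))
  singleton : ∀ t : ℝ, μ {t} = 0

/-- A locally finite atomless Borel measure on `ℝ`. -/
def GoodMeasure (m : Measure ℝ) : Prop :=
  IsLocallyFiniteMeasure m ∧ ∀ t : ℝ, m {t} = 0

/-- `P` is a finite Borel partition of `A`. -/
def IsBorelPartition (A : Set ℝ) {n : ℕ} (P : Fin n → Set ℝ) : Prop :=
  (∀ i, MeasurableSet (P i)) ∧ Pairwise (Function.onFun Disjoint P) ∧ (⋃ i, P i) = A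

/-- `|μ| ≤ m` : total-variation bound of the set function `μ` by the measure `m`,
expressed through finite Borel partitions of bounded Borel sets. -/
def TVLE (μ : Set ℝ → ℝ) (m : Measure ℝ) : Prop :=
  ∀ A : Set ℝ, Bornology.IsBounded A → MeasurableSet A →
    ∀ (n : ℕ) (P : Fin n → Set ℝ), IsBorelPartition A P →
      ∑ i, |μ (P i)| ≤ (m A).toReal

/-- Partition-sum bound `Σ |μ₁(Aᵢ) - μ₂(Aᵢ)| ≤ c · l(A)` for the difference of two
set functions, over finite Borel partitions of bounded Borel sets. -/
def DiffLE (μ₁ μ₂ : Set ℝ → ℝ) (c : ℝ) (l : Measure ℝ) : Prop :=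
  ∀ A : Set ℝ, Bornology.IsBounded A → MeasurableSet A →
    ∀ (n : ℕ) (P : Fin n → Set ℝ), IsBorelPartition A P →
      ∑ i, |μ₁ (P i) - μ₂ (P i)| ≤ c * (l A).toReal

variable {E : Type*} [NormedAddCommGroup E]

/-- `m` is an m-bound of `ν` on the closed ball of radius `j`. -/
def HasMBound (ν : E → Set ℝ → ℝ) (j : ℕ) (m : Measure ℝ) : Prop :=
  GoodMeasure m ∧ ∀ y : E, ‖y‖ ≤ (j : ℝ) → TVLE (ν y) m

/-- `l` is an l-bound of `ν` on the closed ball of radius `j`, for the modulus `ω`. -/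
def HasLBound (ω : ℝ → ℝ) (ν : E → Set ℝ → ℝ) (j : ℕ) (l : Measure ℝ) : Prop :=
  GoodMeasure l ∧ ∀ y₁ y₂ : E, ‖y₁‖ ≤ (j : ℝ) → ‖y₂‖ ≤ (j : ℝ) →
    DiffLE (ν y₁) (ν y₂) (ω ‖y₁ - y₂‖) l

/-- A non-decreasing family of moduli of continuity `{ω_j}`. -/
structure IsModulusFamily (ω : ℕ → ℝ → ℝ) : Prop where
  continuousOn : ∀ j, ContinuousOn (ω j) (Ici 0)
  monotoneOn : ∀ j, MonotoneOn (ω j) (Ici 0)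
  map_zero : ∀ j, ω j 0 = 0
  nonneg : ∀ j x, 0 ≤ x → 0 ≤ ω j x
  mono_index : ∀ j x, 0 ≤ x → ω j x ≤ ω (j + 1) x

/-- A parametric b-measure on `E` with respect to the family of moduli `ω`. -/
def IsParamBMeasure (ω : ℕ → ℝ → ℝ) (ν : E → Set ℝ → ℝ) : Prop :=
  (∀ y, IsBMeasure (ν y)) ∧
    ∀ j : ℕ, 1 ≤ j → ∃ m l : Measure ℝ, HasMBound ν j m ∧ HasLBound (ω j) ν j l

/-- A tagged partition of `[a,b]`. -/
structure TaggedPartition (a b : ℝ) where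
  k : ℕ
  k_pos : 0 < k
  t : ℕ → ℝ
  tag : ℕ → ℝ
  left : t 0 = a
  right : t k = b
  lt : ∀ i < k, t i < t (i + 1)
  tag_mem : ∀ i < k, tag i ∈ Set.Icc (t i) (t (i + 1))

/-- The mesh of the tagged partition is `< δ`. -/
def TaggedPartition.MeshLT {a b : ℝ} (P : TaggedPartition a b) (δ : ℝ) : Prop :=
  ∀ i < P.k, P.t (i + 1) - P.t i < δ

/-- The Riemann sum of the parametric b-measure `ν` along the curve `y` over the
tagged partition `P`. -/
def RiemannSum (ν : E → Set ℝ → ℝ) (y : ℝ → E) {a b : ℝ} (P : TaggedPartition a b) : ℝ :=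
  ∑ i ∈ Finset.range P.k, ν (y (P.tag i)) (Set.Icc (P.t i) (P.t (i + 1)))

/-- `L = ∫_a^b dν_{y(s)}` : `L` is the limit of the Riemann sums of `ν` along `y`
over tagged partitions of `[a,b]` as the mesh tends to `0`. -/
def IsCurveIntegral (ν : E → Set ℝ → ℝ) (y : ℝ → E) (a b : ℝ) (L : ℝ) : Prop :=
  ∀ ε > 0, ∃ δ > 0, ∀ P : TaggedPartition a b, P.MeshLT δ → |L - RiemannSum ν y P| < ε

/-- A suitable set of moduli of continuity `Θ = {θ_j^{[q₁,q₂]}}`. -/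
structure IsSuitableModuli (Θ : ℕ → ℚ → ℚ → ℝ → ℝ) : Prop where
  continuousOn : ∀ (j : ℕ) (q₁ q₂ : ℚ), q₁ < q₂ → ContinuousOn (Θ j q₁ q₂) (Ici 0)
  monotoneOn : ∀ (j : ℕ) (q₁ q₂ : ℚ), q₁ < q₂ → MonotoneOn (Θ j q₁ q₂) (Ici 0)
  map_zero : ∀ (j : ℕ) (q₁ q₂ : ℚ), q₁ < q₂ → Θ j q₁ q₂ 0 = 0
  nonneg : ∀ (j : ℕ) (q₁ q₂ : ℚ) (x : ℝ), q₁ < q₂ → 0 ≤ x → 0 ≤ Θ j q₁ q₂ x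
  mono : ∀ (j₁ j₂ : ℕ) (q₁ q₂ p₁ p₂ : ℚ), j₁ ≤ j₂ → q₁ ≤ p₁ → p₁ < p₂ → p₂ ≤ q₂ →
    ∀ x : ℝ, 0 ≤ x → Θ j₁ p₁ p₂ x ≤ Θ j₂ q₁ q₂ x

/-- The set `𝒦_j^I` of continuous functions `y : I → E`, `I = [q₁,q₂]`, bounded by `j`
and admitting `θ_j^I` as modulus of continuity. -/
def KSet (E : Type*) [NormedAddCommGroup E] (Θ : ℕ → ℚ → ℚ → ℝ → ℝ)
    (j : ℕ) (q₁ q₂ : ℚ) : Set (ℝ → E) :=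
  {y | ContinuousOn y (Set.Icc (q₁ : ℝ) (q₂ : ℝ)) ∧
    (∀ t ∈ Set.Icc (q₁ : ℝ) (q₂ : ℝ), ‖y t‖ ≤ (j : ℝ)) ∧
    ∀ t₁ ∈ Set.Icc (q₁ : ℝ) (q₂ : ℝ), ∀ t₂ ∈ Set.Icc (q₁ : ℝ) (q₂ : ℝ),
      ‖y t₁ - y t₂‖ ≤ Θ j q₁ q₂ |t₁ - t₂|}

/-- Convergence `ν_n → ν₀` in the topology `σ_Θ` : the integrals along curves of
`𝒦_j^I` converge uniformly, for every `j` and every compact interval `I` with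
rational endpoints. -/
def SigmaThetaTendsto {E : Type*} [NormedAddCommGroup E] (Θ : ℕ → ℚ → ℚ → ℝ → ℝ)
    (ν : ℕ → E → Set ℝ → ℝ) (ν₀ : E → Set ℝ → ℝ) : Prop :=
  ∀ (j : ℕ) (q₁ q₂ : ℚ), q₁ < q₂ → ∀ ε > 0, ∃ n₀ : ℕ, ∀ n ≥ n₀,
    ∀ y ∈ KSet E Θ j q₁ q₂, ∀ L L₀ : ℝ,
      IsCurveIntegral (ν n) y (q₁ : ℝ) (q₂ : ℝ) L →
      IsCurveIntegral ν₀ y (q₁ : ℝ) (q₂ : ℝ) L₀ → |L - L₀| < ε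

/-- The time-translate `ν·t` of a parametric b-measure: `(ν·t)_y(A) = ν_y(A + t)`. -/
def BTranslate (ν : E → Set ℝ → ℝ) (t : ℝ) : E → Set ℝ → ℝ :=
  fun y A => ν y ((fun s => s + t) '' A)

/-- The time-translate `m·t` of a Borel measure: `(m·t)(A) = m(A + t)`. -/
noncomputable def MTranslate (m : Measure ℝ) (t : ℝ) : Measure ℝ :=
  Measure.map (fun s => s - t) m

/-- An N-dimensional parametric b-measure on `E` with common m-bounds `m j` and
common Lipschitz l-bounds `l j`. -/
def IsNDimParamBMeasure {M : ℕ} (νbar : Fin M → E → Set ℝ → ℝ)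
    (m l : ℕ → Measure ℝ) : Prop :=
  (∀ i y, IsBMeasure (νbar i y)) ∧
    ∀ j : ℕ, 1 ≤ j → GoodMeasure (m j) ∧ GoodMeasure (l j) ∧
      (∀ i, ∀ y : E, ‖y‖ ≤ (j : ℝ) → TVLE (νbar i y) (m j)) ∧
      (∀ i, ∀ y₁ y₂ : E, ‖y₁‖ ≤ (j : ℝ) → ‖y₂‖ ≤ (j : ℝ) →
        DiffLE (νbar i y₁) (νbar i y₂) ‖y₁ - y₂‖ (l j))

/-- The oriented curve integral: `∫_b^a := -∫_a^b`. -/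
def IsSignedCurveIntegral (ν : E → Set ℝ → ℝ) (y : ℝ → E) (a b : ℝ) (L : ℝ) : Prop :=
  (a ≤ b ∧ IsCurveIntegral ν y a b L) ∨ (b < a ∧ IsCurveIntegral ν y b a (-L))

/-- `y` is a solution on `S` of the Cauchy problem `y' = ν̄_y`, `y(t₀) = y₀`, for the
N-dimensional parametric b-measure `ν̄`: componentwise,
`y_i(t) = y_{0,i} + ∫_{t₀}^t dν^i_{y(s)}`. -/
def IsSolutionOn {M : ℕ} (νbar : Fin M → EuclideanSpace ℝ (Fin M) → Set ℝ → ℝ)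
    (t₀ : ℝ) (y₀ : EuclideanSpace ℝ (Fin M)) (S : Set ℝ)
    (y : ℝ → EuclideanSpace ℝ (Fin M)) : Prop :=
  t₀ ∈ S ∧ y t₀ = y₀ ∧ ContinuousOn y S ∧
    ∀ t ∈ S, ∀ i : Fin M, IsSignedCurveIntegral (νbar i) y t₀ t (y t i - y₀ i)

/-- `y` is the maximal (noncontinuable) solution, defined on the open interval `S`:
every solution on an interval containing `t₀` is a restriction of `y`. -/
def IsMaximalSolution {M : ℕ} (νbar : Fin M → EuclideanSpace ℝ (Fin M) → Set ℝ → ℝ)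
    (t₀ : ℝ) (y₀ : EuclideanSpace ℝ (Fin M)) (S : Set ℝ)
    (y : ℝ → EuclideanSpace ℝ (Fin M)) : Prop :=
  IsSolutionOn νbar t₀ y₀ S y ∧ IsOpen S ∧ S.OrdConnected ∧
    ∀ S' : Set ℝ, S'.OrdConnected → ∀ z, IsSolutionOn νbar t₀ y₀ S' z →
      S' ⊆ S ∧ Set.EqOn z y S'


/-! The Riemann sums form a Cauchy net as the mesh tends to `0`. Two partitions finer than `δ`
are compared on the half-open cells of their common refinement (a b-measure does not see
endpoints); on each nonempty cell the two tags are `2δ`-close, so the l-bound `l_j` bounds the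
difference of the sums by `ω_j(ρ) · l_j([a,b])`, where `ρ` is the oscillation of `y` at scale `2δ`. -/

namespace IsBMeasure

variable {μ : Set ℝ → ℝ}

theorem map_biUnion_finset (h : IsBMeasure μ) {s : Finset ℕ} {A : ℕ → Set ℝ}
    (hm : ∀ i ∈ s, MeasurableSet (A i)) (hb : ∀ i ∈ s, Bornology.IsBounded (A i))
    (hd : (s : Set ℕ).PairwiseDisjoint A) :
    μ (⋃ i ∈ s, A i) = ∑ i ∈ s, μ (A i) := by
  classical
  set B : ℕ → Set ℝ := fun i => if i ∈ s then A i else ∅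
  have hB : ⋃ i, B i = ⋃ i ∈ s, A i := by
    ext x
    simp [B]
  have hsum := h.countably_additive B
    (fun i => by by_cases hi : i ∈ s <;> simp [B, hi, hm])
    (fun i => by by_cases hi : i ∈ s <;> simp [B, hi, hb])
    (fun i j hij => by
      by_cases hi : i ∈ s
      · by_cases hj : j ∈ s
        · simpa [B, Function.onFun, hi, hj] using hd hi hj hij
        · simp [B, Function.onFun, hj]
      · simp [B, Function.onFun, hi])
    (hB ▸ (Bornology.isBounded_biUnion_finset s).2 hb)
  rw [hB] at hsum
  rw [hsum.unique (hasSum_sum_of_ne_finset_zero (s := s) fun i hi => by simp [B, hi, h.empty])]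
  exact Finset.sum_congr rfl fun i hi => by simp [B, hi]

theorem map_union (h : IsBMeasure μ) {A B : Set ℝ} (hA : MeasurableSet A) (hB : MeasurableSet B)
    (hA' : Bornology.IsBounded A) (hB' : Bornology.IsBounded B) (hAB : Disjoint A B) :
    μ (A ∪ B) = μ A + μ B := by
  have := h.map_biUnion_finset (s := {0, 1}) (A := fun i => if i = 0 then A else B)
    (by simp [hA, hB]) (by simp [hA', hB'])
    (by simp [Set.PairwiseDisjoint, Set.pairwise_insert, Function.onFun, hAB, hAB.symm])
  simpa using this

theorem map_Icc (h : IsBMeasure μ) {c d : ℝ} (hcd : c ≤ d) : μ (Icc c d) = μ (Ioc c d) := by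
  rw [← Ioc_insert_left hcd, insert_eq, h.map_union (measurableSet_singleton c) measurableSet_Ioc
    Bornology.isBounded_singleton (Metric.isBounded_Ioc _ _) (by simp), h.singleton, zero_add]

end IsBMeasure

theorem GoodMeasure.isBMeasure_real {l : Measure ℝ} (hl : GoodMeasure l) : IsBMeasure l.real where
  empty := measureReal_empty
  countably_additive A hm _ hd hb := by
    have := hl.1
    have hfin : ∑' n, l (A n) ≠ ⊤ := measure_iUnion hd hm ▸ hb.measure_lt_top.ne
    simpa [measureReal_def, measure_iUnion hd hm,
      ENNReal.tsum_toReal_eq (ENNReal.ne_top_of_tsum_ne_top hfin)] using ENNReal.hasSum_toReal hfin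
  singleton t := by simp [measureReal_def, hl.2 t]

theorem DiffLE.mono {μ₁ μ₂ : Set ℝ → ℝ} {c c' : ℝ} {l : Measure ℝ} (h : DiffLE μ₁ μ₂ c l)
    (hc : c ≤ c') : DiffLE μ₁ μ₂ c' l := fun A hb hm n P hP =>
  (h A hb hm n P hP).trans (mul_le_mul_of_nonneg_right hc ENNReal.toReal_nonneg)

theorem DiffLE.abs_sub_le {μ₁ μ₂ : Set ℝ → ℝ} {c : ℝ} {l : Measure ℝ} (h : DiffLE μ₁ μ₂ c l)
    {A : Set ℝ} (hb : Bornology.IsBounded A) (hm : MeasurableSet A) :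
    |μ₁ A - μ₂ A| ≤ c * l.real A := by
  simpa [measureReal_def] using h A hb hm 1 (fun _ => A)
    ⟨fun _ => hm, fun i j hij => (hij (Subsingleton.elim i j)).elim, iUnion_const A⟩

namespace TaggedPartition

variable {a b : ℝ} (P : TaggedPartition a b)

def cell (i : ℕ) : Set ℝ := Ioc (P.t i) (P.t (i + 1))

theorem strictMonoOn_t : StrictMonoOn P.t (Iic P.k) :=
  strictMonoOn_Iic_of_lt_succ P.lt

theorem t_le_t {i j : ℕ} (hij : i ≤ j) (hj : j ≤ P.k) : P.t i ≤ P.t j :=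
  P.strictMonoOn_t.monotoneOn (hij.trans hj) hj hij

theorem left_le_right (P : TaggedPartition a b) : a ≤ b := by
  simpa only [P.left, P.right] using P.t_le_t (Nat.zero_le _) le_rfl

theorem tag_mem_Icc {i : ℕ} (hi : i < P.k) : P.tag i ∈ Icc a b := by
  have h0 := P.t_le_t (Nat.zero_le i) hi.le
  have hk := P.t_le_t hi le_rfl
  rw [P.left] at h0
  rw [P.right] at hk
  exact ⟨h0.trans (P.tag_mem i hi).1, (P.tag_mem i hi).2.trans hk⟩

theorem pairwiseDisjoint_cell : (Finset.range P.k : Set ℕ).PairwiseDisjoint P.cell := by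
  intro i hi j hj hij
  wlog hlt : i < j generalizing i j
  · exact (this hj hi hij.symm (by omega)).symm
  exact Ioc_disjoint_Ioc_of_le (P.t_le_t hlt (Finset.mem_range.1 hj).le)

theorem biUnion_cell : ⋃ i ∈ Finset.range P.k, P.cell i = Ioc a b := by
  suffices ∀ n ≤ P.k, ⋃ i ∈ Finset.range n, P.cell i = Ioc (P.t 0) (P.t n) by
    rw [this P.k le_rfl, P.left, P.right]
  intro n hn
  induction n with
  | zero => simp
  | succ n ih =>
    rw [Finset.range_add_one, Finset.set_biUnion_insert, ih (by omega), union_comm, cell,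
      Ioc_union_Ioc_eq_Ioc (P.t_le_t (Nat.zero_le n) (by omega)) (P.lt n (by omega)).le]

theorem cell_subset {i : ℕ} (hi : i < P.k) : P.cell i ⊆ Ioc a b :=
  P.biUnion_cell ▸ subset_biUnion_of_mem (u := P.cell) (Finset.mem_range.2 hi)

theorem abs_tag_sub_lt {δ : ℝ} (hP : P.MeshLT δ) {i : ℕ} (hi : i < P.k) {x : ℝ}
    (hx : x ∈ P.cell i) : |P.tag i - x| < δ := by
  have htag := P.tag_mem i hi
  have hmesh := hP i hi
  rw [cell, mem_Ioc] at hx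
  rw [abs_lt]
  constructor <;> linarith [htag.1, htag.2]

end TaggedPartition

theorem IsBMeasure.eq_sum_inter_cell {μ : Set ℝ → ℝ} (h : IsBMeasure μ) {a b : ℝ}
    (Q : TaggedPartition a b) {A : Set ℝ} (hA : A ⊆ Ioc a b) (hm : MeasurableSet A)
    (hb : Bornology.IsBounded A) :
    μ A = ∑ k ∈ Finset.range Q.k, μ (A ∩ Q.cell k) := by
  conv_lhs => rw [← inter_eq_left.2 hA, ← Q.biUnion_cell, inter_iUnion₂]
  exact h.map_biUnion_finset (fun _ _ => hm.inter measurableSet_Ioc)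
    (fun _ _ => hb.subset inter_subset_left)
    (Q.pairwiseDisjoint_cell.mono fun _ => inter_subset_right)

section RiemannSum

variable {E : Type*} {ν : E → Set ℝ → ℝ} {y : ℝ → E} {a b : ℝ}

theorem riemannSum_eq_sum_cell_inter (hν : ∀ z, IsBMeasure (ν z)) (P Q : TaggedPartition a b) :
    RiemannSum ν y P = ∑ i ∈ Finset.range P.k, ∑ k ∈ Finset.range Q.k,
      ν (y (P.tag i)) (P.cell i ∩ Q.cell k) := by
  refine Finset.sum_congr rfl fun i hi => ?_
  have hi := Finset.mem_range.1 hi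
  rw [(hν _).map_Icc (P.lt i hi).le]
  exact (hν _).eq_sum_inter_cell Q (P.cell_subset hi) measurableSet_Ioc (Metric.isBounded_Ioc _ _)

theorem abs_riemannSum_sub_le (hν : ∀ z, IsBMeasure (ν z)) {l : Measure ℝ} (hl : GoodMeasure l)
    {δ c : ℝ} (hclose : ∀ s ∈ Icc a b, ∀ t ∈ Icc a b, |s - t| < 2 * δ →
      DiffLE (ν (y s)) (ν (y t)) c l)
    (P Q : TaggedPartition a b) (hP : P.MeshLT δ) (hQ : Q.MeshLT δ) :
    |RiemannSum ν y P - RiemannSum ν y Q| ≤ c * l.real (Icc a b) := by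
  have hl' := hl.isBMeasure_real
  have hlsum : l.real (Icc a b) = ∑ i ∈ Finset.range P.k, ∑ k ∈ Finset.range Q.k,
      l.real (P.cell i ∩ Q.cell k) := by
    rw [hl'.map_Icc P.left_le_right, hl'.eq_sum_inter_cell P subset_rfl measurableSet_Ioc
      (Metric.isBounded_Ioc _ _)]
    refine Finset.sum_congr rfl fun i hi => ?_
    rw [inter_eq_right.2 (P.cell_subset (Finset.mem_range.1 hi))]
    exact hl'.eq_sum_inter_cell Q (P.cell_subset (Finset.mem_range.1 hi)) measurableSet_Ioc
      (Metric.isBounded_Ioc _ _)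
  rw [riemannSum_eq_sum_cell_inter hν P Q, riemannSum_eq_sum_cell_inter hν Q P,
    Finset.sum_comm (s := Finset.range Q.k), hlsum, Finset.mul_sum, ← Finset.sum_sub_distrib]
  refine (Finset.abs_sum_le_sum_abs _ _).trans (Finset.sum_le_sum fun i hi => ?_)
  rw [Finset.mul_sum, ← Finset.sum_sub_distrib]
  refine (Finset.abs_sum_le_sum_abs _ _).trans (Finset.sum_le_sum fun k hk => ?_)
  rw [inter_comm (Q.cell k)]
  rcases (P.cell i ∩ Q.cell k).eq_empty_or_nonempty with hempty | ⟨x, hxP, hxQ⟩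
  · simp [hempty, (hν _).empty]
  have hi := Finset.mem_range.1 hi
  have hk := Finset.mem_range.1 hk
  have htags : |P.tag i - Q.tag k| < 2 * δ := by
    linarith [abs_sub_le (P.tag i) x (Q.tag k), P.abs_tag_sub_lt hP hi hxP,
      abs_sub_comm x (Q.tag k) ▸ Q.abs_tag_sub_lt hQ hk hxQ]
  exact (hclose _ (P.tag_mem_Icc hi) _ (Q.tag_mem_Icc hk) htags).abs_sub_le
    (Metric.isBounded_Ioc _ _ |>.subset inter_subset_left) (measurableSet_Ioc.inter measurableSet_Ioc)

def meshFilter (a b : ℝ) : Filter (TaggedPartition a b) :=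
  ⨅ (δ : ℝ) (_ : 0 < δ), 𝓟 {P | P.MeshLT δ}

theorem hasBasis_meshFilter :
    (meshFilter a b).HasBasis (fun δ : ℝ => 0 < δ) fun δ => {P | P.MeshLT δ} :=
  hasBasis_biInf_principal' (fun δ₁ h₁ δ₂ h₂ => ⟨min δ₁ δ₂, lt_min h₁ h₂,
    fun _ hP i hi => (hP i hi).trans_le (min_le_left _ _),
    fun _ hP i hi => (hP i hi).trans_le (min_le_right _ _)⟩) ⟨1, one_pos⟩

theorem isCurveIntegral_iff_tendsto {L : ℝ} :
    IsCurveIntegral ν y a b L ↔ Tendsto (RiemannSum ν y) (meshFilter a b) (𝓝 L) := by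
  rw [hasBasis_meshFilter.tendsto_iff Metric.nhds_basis_ball]
  simp only [IsCurveIntegral, mem_ofPred_eq, Metric.mem_ball, Real.dist_eq, abs_sub_comm L]

theorem exists_isCurveIntegral_of_cauchy
    (h : ∀ ε > 0, ∃ δ > 0, ∀ P Q : TaggedPartition a b, P.MeshLT δ → Q.MeshLT δ →
      |RiemannSum ν y P - RiemannSum ν y Q| < ε) :
    ∃ L, IsCurveIntegral ν y a b L := by
  simp_rw [isCurveIntegral_iff_tendsto]
  rcases (meshFilter a b).eq_or_neBot with hbot | hne
  -- no tagged partition of `[a,b]` exists (`b ≤ a`): every `L` is an integral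
  · exact ⟨0, hbot ▸ tendsto_bot⟩
  refine cauchy_map_iff_exists_tendsto.1 (Metric.cauchy_iff.2 ⟨hne.map _, fun ε hε => ?_⟩)
  obtain ⟨δ, hδ, hPQ⟩ := h ε hε
  refine ⟨_, image_mem_map (hasBasis_meshFilter.mem_of_mem hδ), ?_⟩
  rintro _ ⟨P, hP, rfl⟩ _ ⟨Q, hQ, rfl⟩
  exact hPQ P Q hP hQ

end RiemannSum

theorem stmt1_general {N : ℕ} (ω : ℕ → ℝ → ℝ) (hω : IsModulusFamily ω)
    (ν : EuclideanSpace ℝ (Fin N) → Set ℝ → ℝ) (hν : IsParamBMeasure ω ν)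
    (a b : ℝ) (y : ℝ → EuclideanSpace ℝ (Fin N))
    (hy : ContinuousOn y (Set.Icc a b)) :
    ∃ L : ℝ, IsCurveIntegral ν y a b L := by
  obtain ⟨C, hC⟩ := isCompact_Icc.exists_bound_of_continuousOn hy
  obtain ⟨j, hj, hCj⟩ : ∃ j : ℕ, 1 ≤ j ∧ C ≤ j :=
    ⟨⌈C⌉₊ + 1, by omega, by push_cast; linarith [Nat.le_ceil C]⟩
  obtain ⟨-, l, -, hl, hlip⟩ := hν.2 j hj
  refine exists_isCurveIntegral_of_cauchy fun ε hε => ?_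
  have hω0 : Tendsto (fun ρ => ω j ρ * l.real (Icc a b)) (𝓝[>] 0) (𝓝 0) := by
    simpa [hω.map_zero] using (((hω.continuousOn j) 0 self_mem_Ici).tendsto.mono_left
      (nhdsWithin_mono _ Ioi_subset_Ici_self)).mul_const (l.real (Icc a b))
  obtain ⟨ρ, hρε, hρ⟩ := ((hω0.eventually (gt_mem_nhds hε)).and self_mem_nhdsWithin).exists
  obtain ⟨δ, hδ, hyδ⟩ := Metric.uniformContinuousOn_iff.1
    (isCompact_Icc.uniformContinuousOn_of_continuous hy) ρ hρ
  refine ⟨δ / 2, by positivity, fun P Q hP hQ =>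
    (abs_riemannSum_sub_le hν.1 hl (fun s hs t ht hst => ?_) P Q hP hQ).trans_lt hρε⟩
  refine (hlip _ _ ((hC s hs).trans hCj) ((hC t ht).trans hCj)).mono ?_
  refine hω.monotoneOn j (norm_nonneg _) (le_of_lt hρ) (dist_eq_norm (y s) (y t) ▸ ?_)
  exact (hyδ s hs t ht (by rw [Real.dist_eq]; linarith)).le

theorem stmt1 {N : ℕ} (ω : ℕ → ℝ → ℝ) (hω : IsModulusFamily ω)
    (ν : EuclideanSpace ℝ (Fin N) → Set ℝ → ℝ) (hν : IsParamBMeasure ω ν)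
    (a b : ℝ) (hab : a ≤ b) (y : ℝ → EuclideanSpace ℝ (Fin N))
    (hy : ContinuousOn y (Set.Icc a b)) :
    ∃ L : ℝ, IsCurveIntegral ν y a b L :=
  stmt1_general ω hω ν hν a b y hy
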